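/- arXiv:2110.07567 — 2 statements merged into one kernel-verified Lean document; each statement's English description precedes it below -/
import Mathlib

section
/- (Descent lemma for preconditioned stochastic gradient with bounded Hessian approximation, nonconvex case) Let f be Λ-smooth and bounded below by f̂. Under the update ω_{t+1} = ω_t - α H_t g_t, where θ₁I ⪯ H_t ⪯ θ₂I, E[g_t|ω_t] = ∇f(ω_t), and E[‖g_t‖²|ω_t] ≤ γ² + η‖∇f(ω_t)‖², with constant step size α ∈ (0, θ₁/(θ₂²ηΛ)), the averaged squared gradient norm satisfies E[(1/T)Σ_{t=0}^{T-1} ‖∇f(ω_t)‖²] ≤ (αθ₂²γ²Λ)/θ₁ + 2(f(ω₀) - f̂)/(αθ₁T). -/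
/-! Averaged over the noise, the descent inequality of Λ-smoothness along the step
`-α H_t g_t` has linear term `-α ⟪∇f, H_t ∇f⟫ ≤ -α θ₁ ‖∇f‖²` (unbiasedness) and quadratic term
at most `Λ α² θ₂² (γ² + η ‖∇f‖²) / 2` (since `‖H_t‖ ≤ θ₂`). The step-size condition lets half of
the linear term absorb the `η ‖∇f‖²` part, so `E f(ω_{t+1}) ≤ E f(ω_t) - α θ₁ E‖∇f(ω_t)‖² / 2
+ Λ α² θ₂² γ² / 2`; telescoping over `t < T` and `f ≥ f̂` give the bound. -/

open RealInnerProductSpace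

/-- Trajectory of the preconditioned stochastic method: `ω_{t+1} = ω_t - α H_t g(ω_t, ξ_t)`,
as a function of the finitely many noise samples drawn so far. -/
noncomputable def traj7 {d : ℕ} {Ω : Type*} (ω0 : EuclideanSpace ℝ (Fin d)) (α : ℝ)
    (H : ℕ → (EuclideanSpace ℝ (Fin d) →L[ℝ] EuclideanSpace ℝ (Fin d)))
    (g : EuclideanSpace ℝ (Fin d) → Ω → EuclideanSpace ℝ (Fin d)) :
    (t : ℕ) → (Fin t → Ω) → EuclideanSpace ℝ (Fin d)
  | 0, _ => ω0
  | (t + 1), v => traj7 ω0 α H g t (Fin.init v) -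
      α • H t (g (traj7 ω0 α H g t (Fin.init v)) (v (Fin.last t)))

theorem le_add_inner_gradient_add_sq {E : Type*} [NormedAddCommGroup E] [InnerProductSpace ℝ E]
    [CompleteSpace E] {f : E → ℝ} {Λ : ℝ} (hf : Differentiable ℝ f)
    (hlip : ∀ x y, ‖gradient f y - gradient f x‖ ≤ Λ * ‖y - x‖) (x y : E) :
    f y ≤ f x + ⟪gradient f x, y - x⟫ + Λ / 2 * ‖y - x‖ ^ 2 := by
  set c : ℝ → E := fun s => x + s • (y - x) with hc_def
  have hc : ∀ s, HasDerivAt c (y - x) s := fun s => by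
    convert ((hasDerivAt_id' s).smul_const (y - x)).const_add x using 1
    rw [one_smul]
  have hfc : ∀ s, HasDerivAt (fun s => f (c s)) ⟪gradient f (c s), y - x⟫ s := fun s => by
    have := (hf (c s)).hasGradientAt.hasFDerivAt.comp_hasDerivAt s (hc s)
    rw [InnerProductSpace.toDual_apply_apply] at this
    exact this
  have hB : ∀ s,
      HasDerivAt (fun s => f x + s * ⟪gradient f x, y - x⟫ + Λ / 2 * s ^ 2 * ‖y - x‖ ^ 2)
      (⟪gradient f x, y - x⟫ + Λ * s * ‖y - x‖ ^ 2) s := fun s => by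
    refine ((((hasDerivAt_id' s).mul_const ⟪gradient f x, y - x⟫).const_add (f x)).add
      (((hasDerivAt_pow 2 s).const_mul (Λ / 2)).mul_const (‖y - x‖ ^ 2))).congr_deriv ?_
    push_cast; ring
  have hbound : ∀ s ∈ Set.Ico (0 : ℝ) 1,
      ⟪gradient f (c s), y - x⟫ ≤ ⟪gradient f x, y - x⟫ + Λ * s * ‖y - x‖ ^ 2 := by
    intro s hs
    have hgrad : ‖gradient f (c s) - gradient f x‖ ≤ Λ * s * ‖y - x‖ := by
      simpa [hc_def, norm_smul, abs_of_nonneg hs.1, mul_assoc] using hlip x (c s)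
    calc ⟪gradient f (c s), y - x⟫
        = ⟪gradient f x, y - x⟫ + ⟪gradient f (c s) - gradient f x, y - x⟫ := by
          rw [inner_sub_left]; ring
      _ ≤ ⟪gradient f x, y - x⟫ + ‖gradient f (c s) - gradient f x‖ * ‖y - x‖ := by
          gcongr; exact real_inner_le_norm _ _
      _ ≤ ⟪gradient f x, y - x⟫ + Λ * s * ‖y - x‖ * ‖y - x‖ := by gcongr
      _ = ⟪gradient f x, y - x⟫ + Λ * s * ‖y - x‖ ^ 2 := by ring
  -- `s ↦ f (c s)` and its quadratic model agree at `0`, and the model grows faster on `[0, 1)`.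
  have := image_le_of_deriv_right_le_deriv_boundary (a := 0) (b := 1)
    (fun s _ => (hfc s).continuousAt.continuousWithinAt) (fun s _ => (hfc s).hasDerivWithinAt)
    (by simp [hc_def]) (fun s _ => (hB s).continuousAt.continuousWithinAt)
    (fun s _ => (hB s).hasDerivWithinAt) hbound (Set.right_mem_Icc.2 zero_le_one)
  simpa [hc_def] using this

theorem ContinuousLinearMap.opNorm_le_of_abs_inner_le {E : Type*} [NormedAddCommGroup E]
    [InnerProductSpace ℝ E] {T : E →L[ℝ] E} (hT : (T : E →ₗ[ℝ] E).IsSymmetric) {θ : ℝ}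
    (hθ : 0 ≤ θ) (h : ∀ v, |⟪v, T v⟫| ≤ θ * ‖v‖ ^ 2) : ‖T‖ ≤ θ := by
  rw [T.norm_eq_iSup_rayleighQuotient hT]
  refine ciSup_le fun v => ?_
  rcases eq_or_ne v 0 with rfl | hv
  · simpa using hθ
  · rw [rayleighQuotient, abs_div, abs_sq, div_le_iff₀ (by positivity), reApplyInnerSelf_apply,
      RCLike.re_to_real, real_inner_comm]
    exact h v

section PathMean

variable {Ω : Type*} [Fintype Ω] (p : Ω → ℝ)

-- Expectation over `t` independent draws from `p`, the law of the noise path fed to `traj7 … t`.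
noncomputable def pathMean (t : ℕ) (φ : (Fin t → Ω) → ℝ) : ℝ :=
  ∑ v : Fin t → Ω, (∏ i, p (v i)) * φ v

theorem pathMean_succ (t : ℕ) (φ : (Fin (t + 1) → Ω) → ℝ) :
    pathMean p (t + 1) φ = pathMean p t fun v => ∑ x, p x * φ (Fin.snoc v x) := by
  rw [pathMean, ← (Fin.snocEquiv fun _ => Ω).sum_comp, Fintype.sum_prod_type, Finset.sum_comm]
  refine Finset.sum_congr rfl fun v _ => ?_
  rw [Finset.mul_sum]
  refine Finset.sum_congr rfl fun x _ => ?_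
  simp only [Fin.snocEquiv_apply, Fin.prod_univ_castSucc, Fin.snoc_castSucc, Fin.snoc_last]
  exact mul_assoc _ _ _

theorem pathMean_const (hp1 : ∑ x, p x = 1) (t : ℕ) (c : ℝ) : pathMean p t (fun _ => c) = c := by
  rw [pathMean, ← Finset.sum_mul, ← Fintype.prod_sum, hp1, Finset.prod_const_one, one_mul]

variable {p}

theorem pathMean_mono (hp : ∀ x, 0 ≤ p x) {t : ℕ} {φ ψ : (Fin t → Ω) → ℝ} (h : ∀ v, φ v ≤ ψ v) :
    pathMean p t φ ≤ pathMean p t ψ :=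
  Finset.sum_le_sum fun v _ =>
    mul_le_mul_of_nonneg_left (h v) (Finset.prod_nonneg fun i _ => hp (v i))

theorem pathMean_sub_mul_add (hp1 : ∑ x, p x = 1) (t : ℕ) (φ ψ : (Fin t → Ω) → ℝ) (a b : ℝ) :
    pathMean p t (fun v => φ v - a * ψ v + b) = pathMean p t φ - a * pathMean p t ψ + b := by
  conv_rhs => rw [← pathMean_const p hp1 t b]
  simp only [pathMean, Finset.mul_sum, ← Finset.sum_sub_distrib, ← Finset.sum_add_distrib]
  exact Finset.sum_congr rfl fun v _ => by ring

end PathMean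

section StochasticDescent

variable {E : Type*} [NormedAddCommGroup E] [InnerProductSpace ℝ E] [CompleteSpace E]
  {Ω : Type*} [Fintype Ω] {p : Ω → ℝ} {f : E → ℝ} {Λ : ℝ}

theorem sum_mul_le_of_lipschitz_gradient (hp : ∀ x, 0 ≤ p x) (hp1 : ∑ x, p x = 1)
    (hf : Differentiable ℝ f) (hlip : ∀ x y, ‖gradient f y - gradient f x‖ ≤ Λ * ‖y - x‖)
    (a : E) (u : Ω → E) :
    ∑ x, p x * f (a - u x) ≤
      f a - ⟪gradient f a, ∑ x, p x • u x⟫ + Λ / 2 * ∑ x, p x * ‖u x‖ ^ 2 :=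
  calc ∑ x, p x * f (a - u x)
      ≤ ∑ x, p x * (f a - ⟪gradient f a, u x⟫ + Λ / 2 * ‖u x‖ ^ 2) := by
        refine Finset.sum_le_sum fun x _ => mul_le_mul_of_nonneg_left ?_ (hp x)
        simpa [sub_eq_add_neg] using le_add_inner_gradient_add_sq hf hlip a (a - u x)
    _ = f a - ⟪gradient f a, ∑ x, p x • u x⟫ + Λ / 2 * ∑ x, p x * ‖u x‖ ^ 2 := by
        simp only [mul_add, mul_sub, Finset.sum_add_distrib, Finset.sum_sub_distrib,
          ← Finset.sum_mul, hp1, one_mul, inner_sum, real_inner_smul_right, Finset.mul_sum]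
        exact congrArg _ (Finset.sum_congr rfl fun x _ => by ring)

theorem preconditioned_expected_descent (hp : ∀ x, 0 ≤ p x) (hp1 : ∑ x, p x = 1)
    (hf : Differentiable ℝ f) (hlip : ∀ x y, ‖gradient f y - gradient f x‖ ≤ Λ * ‖y - x‖)
    {A : E →L[ℝ] E} {θ₁ θ₂ γ η α : ℝ} (hA : ∀ v, θ₁ * ‖v‖ ^ 2 ≤ ⟪v, A v⟫) (hAnorm : ‖A‖ ≤ θ₂)
    (hΛ : 0 ≤ Λ) (hα : 0 ≤ α) (hαstep : α * (θ₂ ^ 2 * η * Λ) ≤ θ₁)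
    {a : E} {g : Ω → E} (hunb : ∑ x, p x • g x = gradient f a)
    (hmom : ∑ x, p x * ‖g x‖ ^ 2 ≤ γ ^ 2 + η * ‖gradient f a‖ ^ 2) :
    ∑ x, p x * f (a - α • A (g x)) ≤
      f a - α * θ₁ / 2 * ‖gradient f a‖ ^ 2 + Λ * α ^ 2 * θ₂ ^ 2 * γ ^ 2 / 2 := by
  have hmean : ∑ x, p x • α • A (g x) = α • A (gradient f a) := by
    simp only [← hunb, map_sum, map_smul, Finset.smul_sum, smul_comm α]
  have hsq : ∑ x, p x * ‖α • A (g x)‖ ^ 2 ≤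
      α ^ 2 * θ₂ ^ 2 * (γ ^ 2 + η * ‖gradient f a‖ ^ 2) :=
    calc ∑ x, p x * ‖α • A (g x)‖ ^ 2
        ≤ ∑ x, p x * (α ^ 2 * θ₂ ^ 2 * ‖g x‖ ^ 2) := by
          refine Finset.sum_le_sum fun x _ => mul_le_mul_of_nonneg_left ?_ (hp x)
          have hAg : ‖A (g x)‖ ≤ θ₂ * ‖g x‖ :=
            (A.le_opNorm _).trans (mul_le_mul_of_nonneg_right hAnorm (norm_nonneg _))
          rw [norm_smul, Real.norm_eq_abs, mul_pow, sq_abs, mul_assoc, ← mul_pow θ₂]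
          gcongr
      _ = α ^ 2 * θ₂ ^ 2 * ∑ x, p x * ‖g x‖ ^ 2 := by
          rw [Finset.mul_sum]
          exact Finset.sum_congr rfl fun x _ => by ring
      _ ≤ α ^ 2 * θ₂ ^ 2 * (γ ^ 2 + η * ‖gradient f a‖ ^ 2) := by gcongr
  have hdesc := sum_mul_le_of_lipschitz_gradient hp hp1 hf hlip a fun x => α • A (g x)
  rw [hmean, real_inner_smul_right] at hdesc
  have hcurv := hA (gradient f a)
  have hG := sq_nonneg ‖gradient f a‖
  nlinarith [mul_le_mul_of_nonneg_left hsq (by positivity : 0 ≤ Λ / 2),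
    mul_le_mul_of_nonneg_left hcurv hα, mul_le_mul_of_nonneg_left hαstep (mul_nonneg hα hG)]

end StochasticDescent

theorem mul_sum_range_le_of_le_sub_mul_add {F G : ℕ → ℝ} {c k : ℝ}
    (h : ∀ t, F (t + 1) ≤ F t - c * G t + k) (T : ℕ) :
    c * ∑ t ∈ Finset.range T, G t ≤ F 0 - F T + T * k := by
  induction T with
  | zero => simp
  | succ T ih =>
    rw [Finset.sum_range_succ, mul_add]
    push_cast
    linarith [h T]

theorem traj7_succ_snoc {d : ℕ} {Ω : Type*} (ω0 : EuclideanSpace ℝ (Fin d)) (α : ℝ)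
    (H : ℕ → (EuclideanSpace ℝ (Fin d) →L[ℝ] EuclideanSpace ℝ (Fin d)))
    (g : EuclideanSpace ℝ (Fin d) → Ω → EuclideanSpace ℝ (Fin d)) (t : ℕ) (v : Fin t → Ω)
    (x : Ω) :
    traj7 ω0 α H g (t + 1) (Fin.snoc v x) =
      traj7 ω0 α H g t v - α • H t (g (traj7 ω0 α H g t v) x) := by
  simp only [traj7, Fin.init_snoc, Fin.snoc_last]

theorem stmt7_general {d : ℕ} {Ω : Type*} [Fintype Ω]
    (p : Ω → ℝ) (hp : ∀ x, 0 ≤ p x) (hp1 : ∑ x, p x = 1)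
    (f : EuclideanSpace ℝ (Fin d) → ℝ) (Λ θ₁ θ₂ γ η α fhat : ℝ)
    (hf : ContDiff ℝ 2 f)
    (hlip : ∀ ω ω' : EuclideanSpace ℝ (Fin d),
      ‖gradient f ω' - gradient f ω‖ ≤ Λ * ‖ω' - ω‖)
    (hbelow : ∀ ω, fhat ≤ f ω)
    (hΛ : 0 < Λ) (hθ1 : 0 < θ₁) (hθ12 : θ₁ ≤ θ₂) (hη : 0 < η)
    (hα0 : 0 < α) (hα1 : α < θ₁ / (θ₂ ^ 2 * η * Λ))
    (H : ℕ → (EuclideanSpace ℝ (Fin d) →L[ℝ] EuclideanSpace ℝ (Fin d)))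
    (hHsa : ∀ t, IsSelfAdjoint (H t))
    (hH : ∀ t v, θ₁ * ‖v‖ ^ 2 ≤ ⟪v, H t v⟫ ∧ ⟪v, H t v⟫ ≤ θ₂ * ‖v‖ ^ 2)
    (g : EuclideanSpace ℝ (Fin d) → Ω → EuclideanSpace ℝ (Fin d))
    (hunb : ∀ ω, ∑ x, p x • g ω x = gradient f ω)
    (hmom : ∀ ω, ∑ x, p x * ‖g ω x‖ ^ 2 ≤ γ ^ 2 + η * ‖gradient f ω‖ ^ 2)
    (ω0 : EuclideanSpace ℝ (Fin d)) (T : ℕ) (hT : 0 < T) :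
    (1 / (T : ℝ)) * ∑ t ∈ Finset.range T,
        (∑ v : Fin t → Ω, (∏ i, p (v i)) * ‖gradient f (traj7 ω0 α H g t v)‖ ^ 2) ≤
      α * θ₂ ^ 2 * γ ^ 2 * Λ / θ₁ + 2 * (f ω0 - fhat) / (α * θ₁ * (T : ℝ)) := by
  have hθ2 : 0 < θ₂ := hθ1.trans_le hθ12
  have hHnorm : ∀ t, ‖H t‖ ≤ θ₂ := fun t =>
    (H t).opNorm_le_of_abs_inner_le (hHsa t).isSymmetric hθ2.le fun v => by
      rw [abs_of_nonneg ((by positivity : 0 ≤ θ₁ * ‖v‖ ^ 2).trans (hH t v).1)]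
      exact (hH t v).2
  have hαstep : α * (θ₂ ^ 2 * η * Λ) ≤ θ₁ := ((lt_div_iff₀ (by positivity)).1 hα1).le
  set F : ℕ → ℝ := fun t => pathMean p t fun v => f (traj7 ω0 α H g t v)
  set G : ℕ → ℝ := fun t => pathMean p t fun v => ‖gradient f (traj7 ω0 α H g t v)‖ ^ 2
  have hdescent (t : ℕ) :
      F (t + 1) ≤ F t - α * θ₁ / 2 * G t + Λ * α ^ 2 * θ₂ ^ 2 * γ ^ 2 / 2 := by
    simp only [F, G, ← pathMean_sub_mul_add hp1, pathMean_succ, traj7_succ_snoc]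
    exact pathMean_mono hp fun v => preconditioned_expected_descent hp hp1
      (hf.differentiable (by norm_num)) hlip (fun w => (hH t w).1) (hHnorm t) hΛ.le hα0.le
      hαstep (hunb _) (hmom _)
  have hF0 : F 0 = f ω0 := by simp [F, pathMean, traj7]
  have hFT : fhat ≤ F T := pathMean_const p hp1 T fhat ▸ pathMean_mono hp fun _ => hbelow _
  have hsum := mul_sum_range_le_of_le_sub_mul_add hdescent T
  have hTpos : (0 : ℝ) < T := by exact_mod_cast hT
  change (1 / (T : ℝ)) * ∑ t ∈ Finset.range T, G t ≤ _
  calc (1 / (T : ℝ)) * ∑ t ∈ Finset.range T, G t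
      = 2 / (α * θ₁ * T) * (α * θ₁ / 2 * ∑ t ∈ Finset.range T, G t) := by field_simp
    _ ≤ 2 / (α * θ₁ * T) * (f ω0 - fhat + T * (Λ * α ^ 2 * θ₂ ^ 2 * γ ^ 2 / 2)) := by
        gcongr; linarith
    _ = α * θ₂ ^ 2 * γ ^ 2 * Λ / θ₁ + 2 * (f ω0 - fhat) / (α * θ₁ * (T : ℝ)) := by
        field_simp; ring

/-- Nonconvex convergence of the preconditioned stochastic method: for `f` Λ-smooth and
bounded below by `fhat`, symmetric preconditioners `θ₁ I ⪯ H_t ⪯ θ₂ I`, unbiased stochastic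
gradients with second moment `≤ γ² + η‖∇f‖²`, and step size `α ∈ (0, θ₁/(θ₂²ηΛ))`:
`E[(1/T) ∑_{t<T} ‖∇f(ω_t)‖²] ≤ αθ₂²γ²Λ/θ₁ + 2(f(ω₀) - fhat)/(αθ₁T)`. -/
theorem stmt7 {d : ℕ} {Ω : Type*} [Fintype Ω]
    (p : Ω → ℝ) (hp : ∀ x, 0 ≤ p x) (hp1 : ∑ x, p x = 1)
    (f : EuclideanSpace ℝ (Fin d) → ℝ) (Λ θ₁ θ₂ γ η α fhat : ℝ)
    (hf : ContDiff ℝ 2 f)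
    (hlip : ∀ ω ω' : EuclideanSpace ℝ (Fin d),
      ‖gradient f ω' - gradient f ω‖ ≤ Λ * ‖ω' - ω‖)
    (hbelow : ∀ ω, fhat ≤ f ω)
    (hΛ : 0 < Λ) (hθ1 : 0 < θ₁) (hθ12 : θ₁ ≤ θ₂) (hγ : 0 ≤ γ) (hη : 0 < η)
    (hα0 : 0 < α) (hα1 : α < θ₁ / (θ₂ ^ 2 * η * Λ))
    (H : ℕ → (EuclideanSpace ℝ (Fin d) →L[ℝ] EuclideanSpace ℝ (Fin d)))
    (hHsa : ∀ t, IsSelfAdjoint (H t))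
    (hH : ∀ t v, θ₁ * ‖v‖ ^ 2 ≤ ⟪v, H t v⟫ ∧ ⟪v, H t v⟫ ≤ θ₂ * ‖v‖ ^ 2)
    (g : EuclideanSpace ℝ (Fin d) → Ω → EuclideanSpace ℝ (Fin d))
    (hunb : ∀ ω, ∑ x, p x • g ω x = gradient f ω)
    (hmom : ∀ ω, ∑ x, p x * ‖g ω x‖ ^ 2 ≤ γ ^ 2 + η * ‖gradient f ω‖ ^ 2)
    (ω0 : EuclideanSpace ℝ (Fin d)) (T : ℕ) (hT : 0 < T) :
    (1 / (T : ℝ)) * ∑ t ∈ Finset.range T,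
        (∑ v : Fin t → Ω, (∏ i, p (v i)) * ‖gradient f (traj7 ω0 α H g t v)‖ ^ 2) ≤
      α * θ₂ ^ 2 * γ ^ 2 * Λ / θ₁ + 2 * (f ω0 - fhat) / (α * θ₁ * (T : ℝ)) :=
  stmt7_general p hp hp1 f Λ θ₁ θ₂ γ η α fhat hf hlip hbelow hΛ hθ1 hθ12 hη hα0 hα1 H hHsa hH g hunb
    hmom ω0 T hT
end

section
/- (Gradient variance bound at optimum, strongly convex case) Let f = (1/n)Σᵢ fᵢ with each fᵢ Λ-smooth, and let ω* minimize f. For the mini-batch gradient g_S(ω) = (1/|S|)Σ_{i∈S}∇fᵢ(ω) with S a uniform random size-b subset, E[‖g_S(ω) - ∇f(ω)‖²] ≤ β(b)·(2Λ²‖ω - ω*‖² + 2E_i[‖∇fᵢ(ω*)‖²]), where β(b) = (n-b)/(b(n-1)). -/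
open Finset in
lemma count_subsets {α : Type*} [DecidableEq α] (s t : Finset α) (ht : t ⊆ s) (b : ℕ)
    (hb : t.card ≤ b) :
    ((Finset.powersetCard b s).filter (fun S => t ⊆ S)).card
      = (s.card - t.card).choose (b - t.card) := by
  rw [show s.card - t.card = (s \ t).card from (Finset.card_sdiff_of_subset ht).symm,
    ← Finset.card_powersetCard (b - t.card) (s \ t)]
  apply Finset.card_bij' (fun S _ => S \ t) (fun U _ => U ∪ t)
  · intro S hS
    simp only [mem_filter, mem_powersetCard] at hS
    simp only [mem_powersetCard]
    exact ⟨sdiff_subset_sdiff hS.1.1 subset_rfl, by rw [card_sdiff_of_subset hS.2, hS.1.2]⟩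
  · intro U hU
    simp only [mem_powersetCard] at hU
    have hdisj : Disjoint U t := (Finset.sdiff_disjoint.mono_left hU.1)
    simp only [mem_filter, mem_powersetCard]
    refine ⟨⟨union_subset (hU.1.trans sdiff_subset) ht, ?_⟩, subset_union_right⟩
    rw [card_union_of_disjoint hdisj, hU.2, Nat.sub_add_cancel hb]
  · intro S hS
    simp only [mem_filter] at hS
    exact sdiff_union_of_subset hS.2
  · intro U hU
    simp only [mem_powersetCard] at hU
    exact union_sdiff_cancel_right (Finset.sdiff_disjoint.mono_left hU.1)

lemma nat_id' {n b : ℕ} (hn : 1 ≤ n) (hb : 1 ≤ b) :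
    n * (n-1).choose (b-1) = n.choose b * b := by
  obtain ⟨m, rfl⟩ := Nat.exists_eq_add_of_le hn
  obtain ⟨k, rfl⟩ := Nat.exists_eq_add_of_le hb
  simp only [Nat.add_sub_cancel_left, Nat.add_comm 1]
  exact Nat.add_one_mul_choose_eq m k

lemma arith16 {n b : ℕ} (hn : 2 ≤ n) (hb1 : 1 ≤ b) (hbn : b ≤ n) :
    (1/(n.choose b:ℝ)) * ((b:ℝ)⁻¹)^2 *
      (((n-1).choose (b-1) : ℝ) - (if 2 ≤ b then (((n-2).choose (b-2) : ℕ) : ℝ) else 0))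
    = ((n:ℝ)-b)/((b:ℝ)*((n:ℝ)-1)) * (n:ℝ)⁻¹ := by
  have hn0 : (n:ℝ) ≠ 0 := by positivity
  have hb0 : (b:ℝ) ≠ 0 := by positivity
  have hn1 : (n:ℝ) - 1 ≠ 0 := by
    have : (2:ℝ) ≤ n := by exact_mod_cast hn
    linarith
  have hC : (n.choose b : ℝ) ≠ 0 := by
    have := Nat.choose_pos hbn; positivity
  have e1 : (n:ℝ) * ((n-1).choose (b-1) : ℝ) = (n.choose b : ℝ) * b := by
    exact_mod_cast congrArg (Nat.cast (R := ℝ)) (nat_id' (by omega) hb1)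
  by_cases h2 : 2 ≤ b
  · rw [if_pos h2]
    have e2 : ((n:ℝ)-1) * ((n-2).choose (b-2) : ℝ) = ((n-1).choose (b-1) : ℝ) * ((b:ℝ)-1) := by
      have h' : ((n-1) * ((n-1-1).choose (b-1-1)) : ℕ) = ((n-1).choose (b-1) * (b-1) : ℕ) :=
        nat_id' (n := n-1) (b := b-1) (by omega) (by omega)
      have hc : (((n-1):ℕ):ℝ) = (n:ℝ) - 1 := by
        push_cast [Nat.cast_sub (by omega : 1 ≤ n)]; ring
      have hc2 : (((b-1):ℕ):ℝ) = (b:ℝ) - 1 := by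
        push_cast [Nat.cast_sub hb1]; ring
      have := congrArg (Nat.cast (R := ℝ)) h'
      push_cast at this
      rw [show n-1-1 = n-2 by omega, show b-1-1 = b-2 by omega] at this
      rw [hc, hc2] at this
      exact_mod_cast this
    field_simp
    linear_combination ((n:ℝ)-(b:ℝ))*e1 - (n:ℝ)*e2
  · have hb : b = 1 := by omega
    subst hb
    rw [if_neg h2]
    simp only [Nat.choose_one_right, Nat.sub_self, Nat.choose_zero_right] at e1 ⊢
    field_simp
    push_cast; ring

lemma hasGradientAt_avg {d n : ℕ} (fi : Fin n → EuclideanSpace ℝ (Fin d) → ℝ)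
    (hdiff : ∀ i, Differentiable ℝ (fi i)) (x : EuclideanSpace ℝ (Fin d)) :
    HasGradientAt (fun ω => (n:ℝ)⁻¹ * ∑ i, fi i ω)
      ((n:ℝ)⁻¹ • ∑ i, gradient (fi i) x) x := by
  rw [hasGradientAt_iff_hasFDerivAt]
  have h : HasFDerivAt (fun ω => (n:ℝ)⁻¹ * ∑ i, fi i ω)
      ((n:ℝ)⁻¹ • ∑ i : Fin n, (InnerProductSpace.toDual ℝ _) (gradient (fi i) x)) x := by
    apply HasFDerivAt.const_mul
    apply HasFDerivAt.fun_sum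
    intro i _
    have := ((hdiff i x).hasGradientAt)
    rwa [hasGradientAt_iff_hasFDerivAt] at this
  rw [map_smul, map_sum]
  exact h

set_option maxHeartbeats 1000000 in
open RealInnerProductSpace in
/-- Gradient variance bound at the optimum: for `f = (1/n)∑ᵢ fᵢ` with each `fᵢ` Λ-smooth,
minimizer `ω*` of `f`, and mini-batch gradient over a uniform size-`b` subset without
replacement, `E‖g_S(ω) - ∇f(ω)‖² ≤ β(b)(2Λ²‖ω-ω*‖² + 2 Eᵢ‖∇fᵢ(ω*)‖²)`. -/
theorem stmt16 {d n : ℕ} (hn : 2 ≤ n) (b : ℕ) (hb1 : 1 ≤ b) (hbn : b ≤ n)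
    (fi : Fin n → EuclideanSpace ℝ (Fin d) → ℝ) (Λ : ℝ) (hΛ : 0 < Λ)
    (hdiff : ∀ i, Differentiable ℝ (fi i))
    (hlip : ∀ i, ∀ ω ω' : EuclideanSpace ℝ (Fin d),
      ‖gradient (fi i) ω' - gradient (fi i) ω‖ ≤ Λ * ‖ω' - ω‖)
    (f : EuclideanSpace ℝ (Fin d) → ℝ) (hf : f = fun ω => (n : ℝ)⁻¹ * ∑ i, fi i ω)
    (ωs : EuclideanSpace ℝ (Fin d)) (hmin : ∀ ω, f ωs ≤ f ω)
    (ω : EuclideanSpace ℝ (Fin d)) :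
    (1 / (n.choose b : ℝ)) *
        ∑ S ∈ Finset.powersetCard b (Finset.univ : Finset (Fin n)),
          ‖(b : ℝ)⁻¹ • (∑ i ∈ S, gradient (fi i) ω) - gradient f ω‖ ^ 2 ≤
      ((n : ℝ) - b) / ((b : ℝ) * ((n : ℝ) - 1)) *
        (2 * Λ ^ 2 * ‖ω - ωs‖ ^ 2 +
          2 * ((n : ℝ)⁻¹ * ∑ i, ‖gradient (fi i) ωs‖ ^ 2)) := by
  classical
  set P := Finset.powersetCard b (Finset.univ : Finset (Fin n)) with hP
  set g : Fin n → EuclideanSpace ℝ (Fin d) := fun i => gradient (fi i) ω with hg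
  have hgf : gradient f ω = (n:ℝ)⁻¹ • ∑ i, g i := by
    rw [hf]; exact (hasGradientAt_avg fi hdiff ω).gradient
  set z : Fin n → EuclideanSpace ℝ (Fin d) := fun i => g i - gradient f ω with hz
  have hn0 : (n:ℝ) ≠ 0 := by positivity
  have hb0 : (b:ℝ) ≠ 0 := by positivity
  have hsumg : ∑ i, g i = (n:ℝ) • gradient f ω := by
    rw [hgf, smul_smul, mul_inv_cancel₀ hn0, one_smul]
  have hzsum : ∑ i, z i = 0 := by
    simp only [hz, Finset.sum_sub_distrib, hsumg, Finset.sum_const, Finset.card_univ,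
      Fintype.card_fin]
    rw [← Nat.cast_smul_eq_nsmul ℝ, sub_self]
  -- per subset rewrite
  have hterm : ∀ S ∈ P, ‖(b:ℝ)⁻¹ • (∑ i ∈ S, g i) - gradient f ω‖^2
      = ((b:ℝ)⁻¹)^2 * ‖∑ i ∈ S, z i‖^2 := by
    intro S hS
    have hcard : S.card = b := (Finset.mem_powersetCard.1 hS).2
    have hrw : (b:ℝ)⁻¹ • (∑ i ∈ S, g i) - gradient f ω = (b:ℝ)⁻¹ • (∑ i ∈ S, z i) := by
      simp only [hz, Finset.sum_sub_distrib, Finset.sum_const, hcard, smul_sub]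
      rw [← Nat.cast_smul_eq_nsmul ℝ, smul_smul, inv_mul_cancel₀ hb0, one_smul]
    rw [hrw, norm_smul, mul_pow]
    congr 1
    rw [norm_inv, Real.norm_natCast]
  -- counting
  have hNd : ∀ i : Fin n, (P.filter fun S => i ∈ S ∧ i ∈ S).card = (n-1).choose (b-1) := by
    intro i
    have h1 : (P.filter fun S => i ∈ S ∧ i ∈ S)
        = (P.filter fun S => ({i} : Finset (Fin n)) ⊆ S) := by
      apply Finset.filter_congr; intro S _; simp
    rw [h1, hP, count_subsets _ _ (Finset.subset_univ _) b
      (by simpa using hb1), Finset.card_univ, Fintype.card_fin, Finset.card_singleton]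
  set c2 : ℕ := if 2 ≤ b then (n-2).choose (b-2) else 0 with hc2
  have hNo : ∀ i j : Fin n, i ≠ j → (P.filter fun S => i ∈ S ∧ j ∈ S).card = c2 := by
    intro i j hij
    have h1 : (P.filter fun S => i ∈ S ∧ j ∈ S)
        = (P.filter fun S => ({i, j} : Finset (Fin n)) ⊆ S) := by
      apply Finset.filter_congr; intro S _
      simp [Finset.insert_subset_iff]
    have hcardt : ({i, j} : Finset (Fin n)).card = 2 := by
      rw [Finset.card_insert_of_notMem (by simpa using hij), Finset.card_singleton]
    by_cases h2 : 2 ≤ b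
    · rw [h1, hP, count_subsets _ _ (Finset.subset_univ _) b (by rw [hcardt]; exact h2),
        Finset.card_univ, Fintype.card_fin, hcardt, hc2, if_pos h2]
    · have hb : b = 1 := by omega
      rw [hc2, if_neg h2, Finset.card_eq_zero, Finset.filter_eq_empty_iff]
      intro S hS
      rintro ⟨hi, hj⟩
      have hsub : ({i, j} : Finset (Fin n)) ⊆ S := by
        simp [Finset.insert_subset_iff, hi, hj]
      have := Finset.card_le_card hsub
      rw [hcardt, (Finset.mem_powersetCard.1 hS).2, hb] at this
      omega
  -- double sum expansion
  have hsq : ∀ (S : Finset (Fin n)), ‖∑ i ∈ S, z i‖^2 = ∑ i ∈ S, ∑ j ∈ S, ⟪z i, z j⟫ := by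
    intro S
    rw [← real_inner_self_eq_norm_sq, sum_inner]
    exact Finset.sum_congr rfl fun i _ => inner_sum _ _ _
  set Z : ℝ := ∑ i, ‖z i‖^2 with hZ
  have hkey : ∑ S ∈ P, ‖∑ i ∈ S, z i‖^2
      = ((n-1).choose (b-1) : ℝ) * Z - (c2 : ℝ) * Z := by
    have step1 : ∑ S ∈ P, ‖∑ i ∈ S, z i‖^2
        = ∑ S ∈ P, ∑ i : Fin n, ∑ j : Fin n, if i ∈ S ∧ j ∈ S then ⟪z i, z j⟫ else 0 := by
      refine Finset.sum_congr rfl fun S _ => ?_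
      rw [hsq]
      rw [eq_comm]
      calc ∑ i : Fin n, ∑ j : Fin n, (if i ∈ S ∧ j ∈ S then ⟪z i, z j⟫ else 0)
          = ∑ i : Fin n, if i ∈ S then (∑ j : Fin n, if j ∈ S then ⟪z i, z j⟫ else 0) else 0 := by
            refine Finset.sum_congr rfl fun i _ => ?_
            by_cases hi : i ∈ S <;> simp [hi]
        _ = ∑ i ∈ S, ∑ j ∈ S, ⟪z i, z j⟫ := by
            rw [Finset.sum_ite_mem, Finset.univ_inter]
            refine Finset.sum_congr rfl fun i _ => ?_
            rw [Finset.sum_ite_mem, Finset.univ_inter]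
    rw [step1, Finset.sum_comm]
    have step2 : ∀ i : Fin n,
        (∑ S ∈ P, ∑ j : Fin n, if i ∈ S ∧ j ∈ S then ⟪z i, z j⟫ else 0)
        = ∑ j : Fin n, (((P.filter fun S => i ∈ S ∧ j ∈ S).card : ℕ) : ℝ) * ⟪z i, z j⟫ := by
      intro i
      rw [Finset.sum_comm]
      refine Finset.sum_congr rfl fun j _ => ?_
      rw [← Finset.sum_filter, Finset.sum_const, nsmul_eq_mul]
    simp_rw [step2]
    -- split diagonal
    have step3 : ∀ i : Fin n,
        (∑ j : Fin n, (((P.filter fun S => i ∈ S ∧ j ∈ S).card : ℕ) : ℝ) * ⟪z i, z j⟫)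
        = ((n-1).choose (b-1) : ℝ) * ‖z i‖^2 + (c2:ℝ) * ∑ j ∈ Finset.univ.erase i, ⟪z i, z j⟫ := by
      intro i
      rw [← Finset.add_sum_erase _ _ (Finset.mem_univ i), hNd i, real_inner_self_eq_norm_sq,
        Finset.mul_sum]
      congr 1
      refine Finset.sum_congr rfl fun j hj => ?_
      rw [hNo i j (Ne.symm (Finset.ne_of_mem_erase hj))]
    simp_rw [step3]
    rw [Finset.sum_add_distrib, ← Finset.mul_sum, ← Finset.mul_sum, ← hZ]
    have hoff : ∑ i, ∑ j ∈ Finset.univ.erase i, ⟪z i, z j⟫ = -Z := by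
      have htot : ∀ i : Fin n, ∑ j : Fin n, ⟪z i, z j⟫ = 0 := by
        intro i
        rw [← inner_sum, hzsum, inner_zero_right]
      have : ∀ i : Fin n, ∑ j ∈ Finset.univ.erase i, ⟪z i, z j⟫ = -‖z i‖^2 := by
        intro i
        have h : ‖z i‖^2 + ∑ j ∈ Finset.univ.erase i, ⟪z i, z j⟫ = ∑ j : Fin n, ⟪z i, z j⟫ := by
          rw [← real_inner_self_eq_norm_sq]
          exact Finset.add_sum_erase Finset.univ (fun j => ⟪z i, z j⟫) (Finset.mem_univ i)
        rw [htot i] at h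
        linarith
      simp_rw [this, hZ, Finset.sum_neg_distrib]
    rw [hoff]
    ring
  -- lhs closed form
  have hLHS : (1 / (n.choose b : ℝ)) * ∑ S ∈ P, ‖(b:ℝ)⁻¹ • (∑ i ∈ S, g i) - gradient f ω‖^2
      = (((n:ℝ)-b)/((b:ℝ)*((n:ℝ)-1)) * (n:ℝ)⁻¹) * Z := by
    rw [Finset.sum_congr rfl hterm, ← Finset.mul_sum, hkey, ← arith16 hn hb1 hbn, hc2]
    push_cast [apply_ite (Nat.cast (R := ℝ))]
    ring
  -- variance bound: Z ≤ ∑ ‖g i‖²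
  have hZle : Z ≤ ∑ i, ‖g i‖^2 := by
    have hexp : ∀ i : Fin n, ‖z i‖^2
        = ‖g i‖^2 - 2 * ⟪g i, gradient f ω⟫ + ‖gradient f ω‖^2 := by
      intro i
      rw [hz]
      exact norm_sub_sq_real _ _
    have hcross : ∑ i, ⟪g i, gradient f ω⟫ = (n:ℝ) * ‖gradient f ω‖^2 := by
      rw [← sum_inner, hsumg, real_inner_smul_left, real_inner_self_eq_norm_sq]
    have hns : (0:ℝ) ≤ (n:ℝ) * ‖gradient f ω‖^2 := by positivity
    rw [hZ]
    calc ∑ i, ‖z i‖^2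
        = ∑ i, ‖g i‖^2 - 2 * ((n:ℝ) * ‖gradient f ω‖^2) + (n:ℝ) * ‖gradient f ω‖^2 := by
          simp_rw [hexp]
          rw [Finset.sum_add_distrib, Finset.sum_sub_distrib, ← Finset.mul_sum, hcross,
            Finset.sum_const, Finset.card_univ, Fintype.card_fin, nsmul_eq_mul]
      _ ≤ ∑ i, ‖g i‖^2 := by linarith
  -- per-term smoothness bound
  have hper : ∀ i : Fin n, ‖g i‖^2 ≤ 2*Λ^2*‖ω - ωs‖^2 + 2*‖gradient (fi i) ωs‖^2 := by
    intro i
    have h1 := hlip i ωs ω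
    have h2 : ‖g i‖ ≤ ‖gradient (fi i) ω - gradient (fi i) ωs‖ + ‖gradient (fi i) ωs‖ := by
      rw [hg]
      calc ‖gradient (fi i) ω‖
          = ‖(gradient (fi i) ω - gradient (fi i) ωs) + gradient (fi i) ωs‖ := by
            rw [sub_add_cancel]
        _ ≤ _ := norm_add_le _ _
    have h3 : (0:ℝ) ≤ ‖gradient (fi i) ω - gradient (fi i) ωs‖ := norm_nonneg _
    have h4 : (0:ℝ) ≤ ‖gradient (fi i) ωs‖ := norm_nonneg _
    have h5 : (0:ℝ) ≤ ‖g i‖ := norm_nonneg _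
    have h6 : (0:ℝ) ≤ Λ * ‖ω - ωs‖ := by positivity
    nlinarith [sq_nonneg (‖gradient (fi i) ω - gradient (fi i) ωs‖ - ‖gradient (fi i) ωs‖)]
  have hβ : (0:ℝ) ≤ ((n:ℝ)-b)/((b:ℝ)*((n:ℝ)-1)) := by
    apply div_nonneg
    · have : (b:ℝ) ≤ n := by exact_mod_cast hbn
      linarith
    · have h1 : (1:ℝ) ≤ b := by exact_mod_cast hb1
      have h2 : (2:ℝ) ≤ n := by exact_mod_cast hn
      nlinarith
  have hsum : ∑ i, ‖g i‖^2 ≤ (n:ℝ) * (2*Λ^2*‖ω - ωs‖^2) + 2 * ∑ i, ‖gradient (fi i) ωs‖^2 := by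
    calc ∑ i, ‖g i‖^2 ≤ ∑ i : Fin n, (2*Λ^2*‖ω - ωs‖^2 + 2*‖gradient (fi i) ωs‖^2) :=
          Finset.sum_le_sum fun i _ => hper i
      _ = (n:ℝ) * (2*Λ^2*‖ω - ωs‖^2) + 2 * ∑ i, ‖gradient (fi i) ωs‖^2 := by
          rw [Finset.sum_add_distrib, ← Finset.mul_sum, ← Finset.mul_sum, Finset.sum_const,
            Finset.card_univ, Fintype.card_fin, nsmul_eq_mul]
          ring
  calc (1 / (n.choose b : ℝ)) * ∑ S ∈ P, ‖(b:ℝ)⁻¹ • (∑ i ∈ S, g i) - gradient f ω‖^2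
      = (((n:ℝ)-b)/((b:ℝ)*((n:ℝ)-1)) * (n:ℝ)⁻¹) * Z := hLHS
    _ ≤ (((n:ℝ)-b)/((b:ℝ)*((n:ℝ)-1)) * (n:ℝ)⁻¹) *
        ((n:ℝ) * (2*Λ^2*‖ω - ωs‖^2) + 2 * ∑ i, ‖gradient (fi i) ωs‖^2) := by
        apply mul_le_mul_of_nonneg_left (hZle.trans hsum)
        positivity
    _ = ((n:ℝ)-b)/((b:ℝ)*((n:ℝ)-1)) *
        (2*Λ^2*‖ω - ωs‖^2 + 2 * ((n:ℝ)⁻¹ * ∑ i, ‖gradient (fi i) ωs‖^2)) := by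
        field_simp
end
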